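/- Let f̂₁, …, f̂_m be elements of a real Hilbert space H with (1/(4m²))·∑_{i≠j} ‖f̂ᵢ − f̂ⱼ‖² ≥ τ for some τ ≥ 0 (τ-diversity), and let R : H → ℝ satisfy the η-strong convexity inequality R(tf+(1−t)f') ≤ tR(f)+(1−t)R(f')−(ηt(1−t)/2)‖f−f'‖². Then for f̄ = (1/m)∑ᵢ f̂ᵢ and any f_* ∈ H: R(f̄) − R(f_*) ≤ (1/m)·∑ᵢ (R(f̂ᵢ) − R(f_*)) − η·τ. -/

import Mathlib

/-!
`R - (η/2)‖·‖²` is convex, so Jensen's inequality for it at the uniform average gives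
`R(f̄) ≤ (1/m) ∑ R(f̂ᵢ) - (η/2)((1/m) ∑ ‖f̂ᵢ‖² - ‖f̄‖²)`, and the bracket is the empirical variance
`(1/(2m²)) ∑_{i,j} ‖f̂ᵢ - f̂ⱼ‖²`, which τ-diversity bounds below by `2τ`.
-/

open Finset

theorem Finset.sum_filter_ne_eq_sum_sum {ι M : Type*} [Fintype ι] [DecidableEq ι]
    [AddCommMonoid M] {g : ι → ι → M} (hg : ∀ i, g i i = 0) :
    ∑ p ∈ (univ : Finset (ι × ι)).filter (fun p => p.1 ≠ p.2), g p.1 p.2 = ∑ i, ∑ j, g i j := by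
  rw [sum_filter_of_ne, ← Fintype.sum_prod_type']
  rintro p - hne heq
  exact hne (heq ▸ hg p.2)

section InnerProduct

variable {H : Type*} [NormedAddCommGroup H] [InnerProductSpace ℝ H]

theorem sum_mul_norm_sq_sub_norm_sum_smul_sq {ι : Type*} (t : Finset ι) {w : ι → ℝ}
    (hw : ∑ i ∈ t, w i = 1) (x : ι → H) :
    ∑ i ∈ t, w i * ‖x i‖ ^ 2 - ‖∑ i ∈ t, w i • x i‖ ^ 2 =
      1 / 2 * ∑ i ∈ t, ∑ j ∈ t, w i * w j * ‖x i - x j‖ ^ 2 := by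
  have hcross : ‖∑ i ∈ t, w i • x i‖ ^ 2 =
      ∑ i ∈ t, ∑ j ∈ t, w i * w j * inner ℝ (x i) (x j) := by
    simp only [← real_inner_self_eq_norm_sq, sum_inner, inner_sum, real_inner_smul_left,
      real_inner_smul_right]
    exact sum_congr rfl fun i _ => sum_congr rfl fun j _ => by rw [real_inner_comm]; ring
  have hexpand : ∀ i j, w i * w j * ‖x i - x j‖ ^ 2 =
      w j * (w i * ‖x i‖ ^ 2) + w i * (w j * ‖x j‖ ^ 2) - 2 * (w i * w j * inner ℝ (x i) (x j)) :=
    fun i j => by rw [norm_sub_sq_real]; ring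
  simp only [hexpand, sum_sub_distrib, sum_add_distrib, ← mul_sum, ← sum_mul, hw, hcross]
  ring

theorem StrongConvexOn.map_sum_le {ι : Type*} {s : Set H} {η : ℝ} {f : H → ℝ}
    (hf : StrongConvexOn s η f) {t : Finset ι} {w : ι → ℝ} {x : ι → H}
    (h₀ : ∀ i ∈ t, 0 ≤ w i) (h₁ : ∑ i ∈ t, w i = 1) (hmem : ∀ i ∈ t, x i ∈ s) :
    f (∑ i ∈ t, w i • x i) ≤
      ∑ i ∈ t, w i * f (x i) - η / 4 * ∑ i ∈ t, ∑ j ∈ t, w i * w j * ‖x i - x j‖ ^ 2 := by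
  have hjensen := (strongConvexOn_iff_convex.1 hf).map_sum_le h₀ h₁ hmem
  have hvar := sum_mul_norm_sq_sub_norm_sum_smul_sq t h₁ x
  simp only [smul_eq_mul, mul_sub, sum_sub_distrib, mul_left_comm (w _) (η / 2),
    ← mul_sum] at hjensen
  have hgain : η / 2 * (∑ i ∈ t, w i * ‖x i‖ ^ 2 - ‖∑ i ∈ t, w i • x i‖ ^ 2) =
      η / 4 * ∑ i ∈ t, ∑ j ∈ t, w i * w j * ‖x i - x j‖ ^ 2 := by
    rw [hvar]; ring
  linarith

end InnerProduct

open Finset in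
theorem stmt_16_general {H : Type*} [NormedAddCommGroup H] [InnerProductSpace ℝ H]
    (η τ : ℝ) (hη : 0 ≤ η)
    (m : ℕ) (hm : 1 ≤ m) (fhat : Fin m → H)
    (R : H → ℝ)
    (hsc : ∀ f f' : H, ∀ t : ℝ, t ∈ Set.Icc (0 : ℝ) 1 →
      R (t • f + (1 - t) • f') ≤ t * R f + (1 - t) * R f' - η * t * (1 - t) / 2 * ‖f - f'‖ ^ 2)
    (hdiv : τ ≤ (1 / (4 * (m : ℝ) ^ 2)) *
      ∑ p ∈ (Finset.univ : Finset (Fin m × Fin m)).filter (fun p => p.1 ≠ p.2),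
        ‖fhat p.1 - fhat p.2‖ ^ 2)
    (fstar : H) :
    R ((1 / (m : ℝ)) • ∑ i, fhat i) - R fstar ≤
      (1 / (m : ℝ)) * ∑ i, (R (fhat i) - R fstar) - η * τ := by
  have hR : StrongConvexOn Set.univ η R := by
    refine ⟨convex_univ, fun x _ y _ a b ha hb hab => ?_⟩
    obtain rfl : b = 1 - a := by linarith
    have := hsc x y a ⟨ha, by linarith⟩
    simp only [smul_eq_mul]
    linarith
  have hm0 : (m : ℝ) ≠ 0 := by positivity
  have hw : ∑ _i : Fin m, (1 / (m : ℝ)) = 1 := by simp [hm0]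
  have hjensen := hR.map_sum_le (fun _ _ => by positivity) hw fun i _ => Set.mem_univ (fhat i)
  simp only [mul_assoc, ← mul_sum, ← smul_sum] at hjensen
  rw [sum_filter_ne_eq_sum_sum (g := fun i j => ‖fhat i - fhat j‖ ^ 2) fun i => by simp] at hdiv
  have hmean :
      (1 / (m : ℝ)) * ∑ i, (R (fhat i) - R fstar) = (1 / m) * ∑ i, R (fhat i) - R fstar := by
    simp [sum_sub_distrib, mul_sub, hm0]
  have hdiversity : η * τ ≤ η / 4 * (1 / m * (1 / m * ∑ i, ∑ j, ‖fhat i - fhat j‖ ^ 2)) := by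
    calc η * τ ≤ η * (1 / (4 * (m : ℝ) ^ 2) * ∑ i, ∑ j, ‖fhat i - fhat j‖ ^ 2) := by gcongr
      _ = _ := by field_simp
  linarith

open Finset in
theorem stmt_16 {H : Type*} [NormedAddCommGroup H] [InnerProductSpace ℝ H]
    (η τ : ℝ) (hη : 0 ≤ η) (hτ : 0 ≤ τ)
    (m : ℕ) (hm : 1 ≤ m) (fhat : Fin m → H)
    (R : H → ℝ)
    (hsc : ∀ f f' : H, ∀ t : ℝ, t ∈ Set.Icc (0 : ℝ) 1 →
      R (t • f + (1 - t) • f') ≤ t * R f + (1 - t) * R f' - η * t * (1 - t) / 2 * ‖f - f'‖ ^ 2)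
    (hdiv : τ ≤ (1 / (4 * (m : ℝ) ^ 2)) *
      ∑ p ∈ (Finset.univ : Finset (Fin m × Fin m)).filter (fun p => p.1 ≠ p.2),
        ‖fhat p.1 - fhat p.2‖ ^ 2)
    (fstar : H) :
    R ((1 / (m : ℝ)) • ∑ i, fhat i) - R fstar ≤
      (1 / (m : ℝ)) * ∑ i, (R (fhat i) - R fstar) - η * τ :=
  stmt_16_general η τ hη m hm fhat R hsc hdiv fstar
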